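/- Let G be a finite group, p a prime, U a Sylow p-subgroup of G, and P a subgroup of G with N_G(U) ≤ P. Let g ∈ U and suppose that U is the unique Sylow p-subgroup of G containing g. Then g fixes exactly one left coset in the left-multiplication action of G on G/P, namely the coset P itself; in particular fix(g,G/P) = 1. -/

import Mathlib

/-!
If `g` fixes the coset `xP`, then `x⁻¹ g x` is a `p`-element of `P`, hence lies in a Sylow
`p`-subgroup `Q` of `G` contained in `P` (because `P` contains the Sylow subgroup `U`). Then `g`
lies in the Sylow subgroup `xQx⁻¹`, which must be `U`; so `x⁻¹Ux = Q ≤ P`. Since `U` and `x⁻¹Ux`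
are Sylow subgroups of `P`, they are conjugate in `P`, and the Frattini argument with
`N_G(U) ≤ P` forces `x ∈ P`.
-/

open MulAction Subgroup Pointwise

section

variable {G : Type*} [Group G]

theorem QuotientGroup.mk_mem_fixedBy_iff {P : Subgroup G} {g x : G} :
    (x : G ⧸ P) ∈ fixedBy (G ⧸ P) g ↔ x⁻¹ * g * x ∈ P := by
  rw [mem_fixedBy, Quotient.smul_coe, eq_comm, QuotientGroup.eq, smul_eq_mul, mul_assoc]

namespace Sylow

variable {p : ℕ}

theorem mem_smul_iff {Q : Sylow p G} {g x : G} :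
    g ∈ ((x • Q : Sylow p G) : Subgroup G) ↔ x⁻¹ * g * x ∈ (Q : Subgroup G) := by
  rw [coe_subgroup_smul, mem_pointwise_smul_iff_inv_smul_mem, ← map_inv, MulAut.smul_def,
    MulAut.conj_apply, inv_inv]

variable [Fact p.Prime] [Finite G]

theorem exists_mem_smul_eq_of_le {P : Subgroup G} {Q R : Sylow p G} (hQ : Q ≤ P) (hR : R ≤ P) :
    ∃ y ∈ P, y • Q = R := by
  obtain ⟨y, hy⟩ := MulAction.exists_smul_eq P (Q.subtype hQ) (R.subtype hR)
  exact ⟨y, y.2, subtype_injective ((smul_subtype hQ y).symm.trans hy)⟩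

theorem exists_le_sylow_le {U : Sylow p G} {P : Subgroup G} (hUP : U ≤ P) {H : Subgroup G}
    (hH : IsPGroup p H) (hHP : H ≤ P) : ∃ Q : Sylow p G, H ≤ Q ∧ Q ≤ P := by
  obtain ⟨S, hS⟩ := (hH.comap_subtype (K := P)).exists_le_sylow
  obtain ⟨y, rfl⟩ := MulAction.exists_smul_eq P (U.subtype hUP) S
  refine ⟨y • U, fun h hh => ?_, smul_le hUP y⟩
  have : (⟨h, hHP hh⟩ : P) ∈ ((y • U).subtype (smul_le hUP y) : Subgroup P) :=
    smul_subtype hUP y ▸ hS hh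
  exact mem_subgroupOf.mp this

theorem mem_of_smul_le_of_normalizer_le {U : Sylow p G} {P : Subgroup G}
    (hNP : normalizer (U : Set G) ≤ P) {x : G} (hx : (x • U : Sylow p G) ≤ P) : x ∈ P := by
  obtain ⟨y, hyP, hy⟩ := exists_mem_smul_eq_of_le hx (le_normalizer.trans hNP)
  have hyx : y * x ∈ normalizer (U : Set G) := smul_eq_iff_mem_normalizer.mp (by rwa [mul_smul])
  simpa using P.mul_mem (P.inv_mem hyP) (hNP hyx)

end Sylow

end

/-- Lemma 4.2 (key step): let `U` be a Sylow `p`-subgroup of a finite group `G`, let `P`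
be a subgroup containing `N_G(U)`, and let `g ∈ U` lie in a unique Sylow `p`-subgroup of
`G` (namely `U`). Then `g` fixes exactly one coset in `G/P`, namely `P` itself; in
particular `fix(g, G/P) = 1`. -/
theorem fix_parabolic_eq_one {G : Type*} [Group G] [Finite G] (p : ℕ) (hp : p.Prime)
    (U : Sylow p G) (P : Subgroup G) (hNP : Subgroup.normalizer ((U : Subgroup G) : Set G) ≤ P)
    (g : G) (hg : g ∈ (U : Subgroup G))
    (huniq : ∀ Q : Sylow p G, g ∈ (Q : Subgroup G) → Q = U) :
    MulAction.fixedBy (G ⧸ P) g = {QuotientGroup.mk (1 : G)} ∧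
      Nat.card (MulAction.fixedBy (G ⧸ P) g) = 1 := by
  have := Fact.mk hp
  have hUP : (U : Subgroup G) ≤ P := le_normalizer.trans hNP
  have hfix : fixedBy (G ⧸ P) g = {QuotientGroup.mk (1 : G)} := by
    ext q
    induction q using QuotientGroup.induction_on with | H x => ?_
    rw [QuotientGroup.mk_mem_fixedBy_iff, Set.mem_singleton_iff, QuotientGroup.eq, mul_one]
    constructor
    · intro hgx
      have hconj : x⁻¹ * g * x ∈ x⁻¹ • U := Sylow.mem_smul_iff.mpr (by group; exact hg)
      obtain ⟨Q, hQ, hQP⟩ := U.exists_le_sylow_le hUP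
        ((x⁻¹ • U).isPGroup'.to_le (zpowers_le.mpr hconj)) (zpowers_le.mpr hgx)
      have hxQ : x • Q = U := huniq _ (Sylow.mem_smul_iff.mpr (zpowers_le.mp hQ))
      exact Sylow.mem_of_smul_le_of_normalizer_le (x := x⁻¹) hNP (by rwa [← hxQ, inv_smul_smul])
    · intro hx
      simpa using P.mul_mem (P.mul_mem hx (hUP hg)) (P.inv_mem hx)
  exact ⟨hfix, by simp [hfix]⟩
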